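/- arXiv:1404.2321 — 7 statements merged into one kernel-verified Lean document; each statement's English description precedes it below -/
import Mathlib

section
/- Let 𝔏 be a finite set of lines in ℝ³ and let 𝒴 be a finite set of irreducible algebraic surfaces in ℝ³, each of degree at most D, such that each surface in 𝒴 contains at least A lines of 𝔏, and such that any two distinct surfaces in 𝒴 share at most D² common lines of 𝔏. If A > 2D·|𝔏|^{1/2}, then |𝒴| ≤ 2·|𝔏|/A. -/
def IsLine (s : Set (Fin 3 → ℝ)) : Prop :=
  ∃ a v : Fin 3 → ℝ, v ≠ 0 ∧ s = {x | ∃ t : ℝ, x = a + t • v}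

def zeroSet (Q : MvPolynomial (Fin 3) ℝ) : Set (Fin 3 → ℝ) :=
  {x | MvPolynomial.eval x Q = 0}

/-!
Pick `k = ⌊2|𝔏|/A⌋ + 1` surfaces and let `d ℓ` be the number of them containing
the line `ℓ`.
Counting incidences, `k A ≤ ∑ d ℓ`; counting incidences with pairs of distinct surfaces,
`∑ d ℓ (d ℓ - 1) ≤ k (k - 1) D²`. Since `2 d ≤ 2 + d (d - 1)`, these give
`2 k A ≤ 2 |𝔏| + k (k - 1) D²`, which is incompatible with `(k - 1) A ≤ 2 |𝔏| < k A`
once `A² ≥ 4 D² |𝔏|`.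
-/

open Finset

namespace Finset

variable {ι γ α : Type*} {L : Finset α}

theorem sum_card_eq_sum_card_filter_mem [DecidableEq α] {t : Finset γ} {g : γ → Finset α}
    (hg : ∀ c ∈ t, g c ⊆ L) : ∑ c ∈ t, #(g c) = ∑ x ∈ L, #{c ∈ t | x ∈ g c} := by
  calc ∑ c ∈ t, #(g c) = ∑ c ∈ t, #(L.bipartiteAbove (fun c x => x ∈ g c) c) :=
        sum_congr rfl fun c hc => by
          rw [bipartiteAbove, filter_mem_eq_inter, inter_eq_right.mpr (hg c hc)]
    _ = _ := sum_card_bipartiteAbove_eq_sum_card_bipartiteBelow _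

theorem two_mul_card_le_two_add_card_offDiag (u : Finset α) : 2 * #u ≤ 2 + #u.offDiag := by
  rw [offDiag_card]
  rcases #u with _ | d
  · simp
  · have hsq : (d + 1) * (d + 1) = (d + 1) * d + (d + 1) := by ring
    rw [hsq, Nat.add_sub_cancel]
    nlinarith [Nat.le_mul_self d]

theorem two_mul_sum_card_le [DecidableEq α] {s : Finset ι} {f : ι → Finset α}
    (hf : ∀ i ∈ s, f i ⊆ L) :
    2 * ∑ i ∈ s, #(f i) ≤ 2 * #L + ∑ p ∈ s.offDiag, #(f p.1 ∩ f p.2) := by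
  have hpairs : ∀ p ∈ s.offDiag, f p.1 ∩ f p.2 ⊆ L := fun p hp =>
    inter_subset_left.trans (hf p.1 (mem_offDiag.mp hp).1)
  have hdeg (x : α) :
      #{p ∈ s.offDiag | x ∈ f p.1 ∩ f p.2} = #{i ∈ s | x ∈ f i}.offDiag := by
    congr 1
    ext p
    simp only [mem_filter, mem_offDiag, mem_inter]
    tauto
  calc 2 * ∑ i ∈ s, #(f i) = ∑ x ∈ L, 2 * #{i ∈ s | x ∈ f i} := by
        rw [sum_card_eq_sum_card_filter_mem hf, mul_sum]
    _ ≤ ∑ x ∈ L, (2 + #{i ∈ s | x ∈ f i}.offDiag) :=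
        sum_le_sum fun x _ => two_mul_card_le_two_add_card_offDiag _
    _ = 2 * #L + ∑ p ∈ s.offDiag, #(f p.1 ∩ f p.2) := by
        rw [sum_add_distrib, sum_const, smul_eq_mul, mul_comm,
          sum_card_eq_sum_card_filter_mem hpairs]
        simp only [hdeg]

theorem two_mul_card_mul_le_of_card_inter_le [DecidableEq α] {s : Finset ι} {f : ι → Finset α}
    {A B : ℝ}
    (hf : ∀ i ∈ s, f i ⊆ L) (hlarge : ∀ i ∈ s, A ≤ #(f i))
    (hinter : ∀ i ∈ s, ∀ j ∈ s, i ≠ j → (#(f i ∩ f j) : ℝ) ≤ B) :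
    2 * #s * A ≤ 2 * #L + #s * (#s - 1) * B := by
  have hsum : #s * A ≤ ∑ i ∈ s, (#(f i) : ℝ) := by
    simpa using card_nsmul_le_sum s _ A hlarge
  have hpairs : ∑ p ∈ s.offDiag, (#(f p.1 ∩ f p.2) : ℝ) ≤ #s * (#s - 1) * B := by
    calc ∑ p ∈ s.offDiag, (#(f p.1 ∩ f p.2) : ℝ)
        ≤ #s.offDiag • B := sum_le_card_nsmul _ _ B fun p hp => by
          obtain ⟨hi, hj, hij⟩ := mem_offDiag.mp hp
          exact hinter _ hi _ hj hij
      _ = #s * (#s - 1) * B := by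
          rw [nsmul_eq_mul, offDiag_card, Nat.cast_sub (Nat.le_mul_self _)]
          push_cast
          ring
  have hbonf : 2 * ∑ i ∈ s, (#(f i) : ℝ) ≤
      2 * #L + ∑ p ∈ s.offDiag, (#(f p.1 ∩ f p.2) : ℝ) := by
    exact_mod_cast two_mul_sum_card_le hf
  linarith

theorem card_le_two_mul_card_div [DecidableEq α] {s : Finset ι} {f : ι → Finset α} {A B : ℝ}
    (hA : 0 < A) (hB : 0 ≤ B) (hsq : 4 * #L * B ≤ A ^ 2)
    (hf : ∀ i ∈ s, f i ⊆ L) (hlarge : ∀ i ∈ s, A ≤ #(f i))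
    (hinter : ∀ i ∈ s, ∀ j ∈ s, i ≠ j → (#(f i ∩ f j) : ℝ) ≤ B) :
    (#s : ℝ) ≤ 2 * #L / A := by
  by_contra! hs
  set k := ⌊2 * #L / A⌋₊ + 1
  have hk : k ≤ #s := Nat.floor_lt (by positivity) |>.mpr hs
  obtain ⟨S, hSs, hSk⟩ := exists_subset_card_eq hk
  have hcount := two_mul_card_mul_le_of_card_inter_le (fun i hi => hf i (hSs hi))
    (fun i hi => hlarge i (hSs hi)) fun i hi j hj => hinter i (hSs hi) j (hSs hj)
  have hkA : 2 * #L < (#S : ℝ) * A := by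
    rw [← div_lt_iff₀ hA, hSk]
    push_cast [k]
    exact Nat.lt_floor_add_one _
  have hk1A : ((#S : ℝ) - 1) * A ≤ 2 * #L := by
    rw [← le_div_iff₀ hA, hSk]
    push_cast [k]
    simpa using Nat.floor_le (by positivity : 0 ≤ 2 * (#L : ℝ) / A)
  nlinarith [mul_le_mul_of_nonneg_left hk1A (by positivity : 0 ≤ (#S : ℝ) * B)]

end Finset

theorem stmt2_general (𝔏 𝒴 : Finset (Set (Fin 3 → ℝ)))
    (D A : ℝ) (hD : 0 < D) (hA : 0 < A)
    (hmany : ∀ Z ∈ 𝒴, A ≤ ({ℓ | ℓ ∈ 𝔏 ∧ ℓ ⊆ Z}.ncard : ℝ))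
    (hbez : ∀ Z₁ ∈ 𝒴, ∀ Z₂ ∈ 𝒴, Z₁ ≠ Z₂ →
      ({ℓ | ℓ ∈ 𝔏 ∧ ℓ ⊆ Z₁ ∧ ℓ ⊆ Z₂}.ncard : ℝ) ≤ D ^ 2)
    (hbig : A > 2 * D * Real.sqrt (𝔏.card)) :
    (𝒴.card : ℝ) ≤ 2 * (𝔏.card : ℝ) / A := by
  classical
  have hncard (p : Set (Fin 3 → ℝ) → Prop) [DecidablePred p] :
      {ℓ | ℓ ∈ 𝔏 ∧ p ℓ}.ncard = #{ℓ ∈ 𝔏 | p ℓ} := by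
    rw [← coe_filter, Set.ncard_coe_finset]
  have hsq : 4 * #𝔏 * D ^ 2 ≤ A ^ 2 := by
    calc 4 * #𝔏 * D ^ 2 = (2 * D * Real.sqrt #𝔏) ^ 2 := by
          rw [mul_pow, Real.sq_sqrt (Nat.cast_nonneg _)]
          ring
      _ ≤ A ^ 2 := pow_le_pow_left₀ (by positivity) hbig.le 2
  refine card_le_two_mul_card_div hA (sq_nonneg D) hsq (fun Z _ => filter_subset (· ⊆ Z) 𝔏)
    (fun Z hZ => hncard (· ⊆ Z) ▸ hmany Z hZ) fun Z₁ hZ₁ Z₂ hZ₂ hne => ?_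
  rw [← filter_and, ← hncard]
  exact hbez Z₁ hZ₁ Z₂ hZ₂ hne

theorem stmt2 (𝔏 𝒴 : Finset (Set (Fin 3 → ℝ))) (hlines : ∀ ℓ ∈ 𝔏, IsLine ℓ)
    (D A : ℝ) (hD : 0 < D) (hA : 0 < A)
    (hsurf : ∀ Z ∈ 𝒴, ∃ Q : MvPolynomial (Fin 3) ℝ,
      Irreducible Q ∧ (Q.totalDegree : ℝ) ≤ D ∧ Z = zeroSet Q)
    (hmany : ∀ Z ∈ 𝒴, A ≤ ({ℓ | ℓ ∈ 𝔏 ∧ ℓ ⊆ Z}.ncard : ℝ))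
    (hbez : ∀ Z₁ ∈ 𝒴, ∀ Z₂ ∈ 𝒴, Z₁ ≠ Z₂ →
      ({ℓ | ℓ ∈ 𝔏 ∧ ℓ ⊆ Z₁ ∧ ℓ ⊆ Z₂}.ncard : ℝ) ≤ D ^ 2)
    (hbig : A > 2 * D * Real.sqrt (𝔏.card)) :
    (𝒴.card : ℝ) ≤ 2 * (𝔏.card : ℝ) / A :=
  stmt2_general 𝔏 𝒴 D A hD hA hmany hbez hbig
end

section
/- For points p₁ = (x₁,y₁), p₂ = (x₂,y₂) in ℝ², define the line l_{p₁,p₂} ⊂ ℝ³ by the equations 2x = (x₁+x₂) + (y₁−y₂)z and 2y = (y₁+y₂) + (x₂−x₁)z. Then for points p₁,p₂,p₃,p₄ ∈ ℝ², the lines l_{p₁,p₃} and l_{p₂,p₄} are intersecting or parallel if and only if |p₁ − p₂| = |p₃ − p₄|. -/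
/-- The line `l_{p,q} ⊂ ℝ³` defined by `2x = (p₁+q₁) + (p₂−q₂)z`, `2y = (p₂+q₂) + (q₁−p₁)z`. -/
def lpq (p q : ℝ × ℝ) : Set (ℝ × ℝ × ℝ) :=
  {x | 2 * x.1 = (p.1 + q.1) + (p.2 - q.2) * x.2.2 ∧
       2 * x.2.1 = (p.2 + q.2) + (q.1 - p.1) * x.2.2}

/-- A direction vector of the line `l_{p,q}`. -/
def dirpq (p q : ℝ × ℝ) : ℝ × ℝ × ℝ := (p.2 - q.2, q.1 - p.1, 2)

theorem stmt7 (p₁ p₂ p₃ p₄ : ℝ × ℝ) :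
    ((∃ x, x ∈ lpq p₁ p₃ ∧ x ∈ lpq p₂ p₄) ∨
      (∃ c : ℝ, c ≠ 0 ∧ dirpq p₁ p₃ = c • dirpq p₂ p₄))
    ↔ Real.sqrt ((p₁.1 - p₂.1)^2 + (p₁.2 - p₂.2)^2)
        = Real.sqrt ((p₃.1 - p₄.1)^2 + (p₃.2 - p₄.2)^2) := by
  obtain ⟨a₁, b₁⟩ := p₁; obtain ⟨a₂, b₂⟩ := p₂
  obtain ⟨a₃, b₃⟩ := p₃; obtain ⟨a₄, b₄⟩ := p₄
  simp only [lpq, dirpq, Set.mem_setOf_eq, Prod.mk.injEq, Prod.smul_mk, smul_eq_mul]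
  constructor
  · rintro (⟨⟨x, y, z⟩, ⟨h1, h2⟩, ⟨h3, h4⟩⟩ | ⟨c, hc, h1, h2, h3⟩)
    · congr 1
      linear_combination ((a₃ - a₁) - (a₄ - a₂)) * (h1 - h3)
        - ((b₁ - b₃) - (b₂ - b₄)) * (h2 - h4)
    · have hc1 : c = 1 := by linarith
      subst hc1
      congr 1
      linear_combination ((b₁ - b₂) + (b₃ - b₄)) * h1 - ((a₁ - a₂) + (a₃ - a₄)) * h2
  · intro h
    have key : (a₁ - a₂)^2 + (b₁ - b₂)^2 = (a₃ - a₄)^2 + (b₃ - b₄)^2 := by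
      have e1 := Real.sq_sqrt (by positivity : (0:ℝ) ≤ (a₁-a₂)^2+(b₁-b₂)^2)
      have e2 := Real.sq_sqrt (by positivity : (0:ℝ) ≤ (a₃-a₄)^2+(b₃-b₄)^2)
      rw [h] at e1
      linarith
    by_cases hB : (b₁ - b₃) - (b₂ - b₄) = 0
    · by_cases hD : (a₃ - a₁) - (a₄ - a₂) = 0
      · right
        exact ⟨1, one_ne_zero, by linarith, by linarith, by ring⟩
      · left
        set z : ℝ := -((b₁ + b₃) - (b₂ + b₄)) / ((a₃ - a₁) - (a₄ - a₂)) with hz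
        refine ⟨(((a₂ + a₄) + (b₂ - b₄) * z) / 2, ((b₂ + b₄) + (a₄ - a₂) * z) / 2, z),
          ⟨?_, ?_⟩, ⟨by ring, by ring⟩⟩
        · have hA : (a₁ + a₃) - (a₂ + a₄) = 0 := by
            have h0 : ((a₁ + a₃) - (a₂ + a₄)) * ((a₃ - a₁) - (a₄ - a₂)) = 0 := by
              linear_combination -key + ((b₁ + b₃) - (b₂ + b₄)) * hB
            rcases mul_eq_zero.1 h0 with h | h
            · exact h
            · exact absurd h hD
          linear_combination -hA - z * hB
        · have hzD : ((a₃-a₁)-(a₄-a₂)) * z = -((b₁+b₃)-(b₂+b₄)) := by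
            rw [hz]; field_simp
          linear_combination -hzD
    · left
      set z : ℝ := -((a₁ + a₃) - (a₂ + a₄)) / ((b₁ - b₃) - (b₂ - b₄)) with hz
      refine ⟨(((a₂ + a₄) + (b₂ - b₄) * z) / 2, ((b₂ + b₄) + (a₄ - a₂) * z) / 2, z),
        ⟨?_, ?_⟩, ⟨by ring, by ring⟩⟩
      · have hzB : ((b₁-b₃)-(b₂-b₄)) * z = -((a₁+a₃)-(a₂+a₄)) := by
          rw [hz]; field_simp
        linear_combination -hzB
      · have hzB : ((b₁-b₃)-(b₂-b₄)) * z = -((a₁+a₃)-(a₂+a₄)) := by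
          rw [hz]; field_simp
        have h0 : ((b₁-b₃)-(b₂-b₄)) *
            (((b₁+b₃)-(b₂+b₄)) + ((a₃-a₁)-(a₄-a₂)) * z) = 0 := by
          linear_combination key + ((a₃-a₁)-(a₄-a₂)) * hzB
        have h1 := (mul_eq_zero.1 h0).resolve_left hB
        linear_combination -h1
end

section
/- With the lines l_{p₁,p₂} ⊂ ℝ³ defined by 2x = (x₁+x₂) + (y₁−y₂)z and 2y = (y₁+y₂) + (x₂−x₁)z, the lines l_{p₁,p₃} and l_{p₂,p₄} are parallel (equal direction, no common point, or equal) if and only if p₁ − p₂ = p₃ − p₄. -/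
theorem stmt8 (p₁ p₂ p₃ p₄ : ℝ × ℝ) :
    (lpq p₁ p₃ = lpq p₂ p₄ ∨
      (dirpq p₁ p₃ = dirpq p₂ p₄ ∧ ¬∃ x, x ∈ lpq p₁ p₃ ∧ x ∈ lpq p₂ p₄))
    ↔ p₁ - p₂ = p₃ - p₄ := by
  have goal_iff : (p₁ - p₂ = p₃ - p₄) ↔
      (p₁.2 - p₃.2 = p₂.2 - p₄.2 ∧ p₃.1 - p₁.1 = p₄.1 - p₂.1) := by
    rw [Prod.ext_iff]
    simp only [Prod.fst_sub, Prod.snd_sub]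
    constructor <;> rintro ⟨h1, h2⟩ <;> constructor <;> linarith
  rw [goal_iff]
  constructor
  · rintro (h | ⟨hd, -⟩)
    · have h0 : ∀ z : ℝ, ((p₁.1 + p₃.1 + (p₁.2 - p₃.2) * z) / 2,
          (p₁.2 + p₃.2 + (p₃.1 - p₁.1) * z) / 2, z) ∈ lpq p₂ p₄ := by
        intro z
        rw [← h]
        constructor <;> simp [lpq] <;> ring
      have h1 := h0 0
      have h2 := h0 1
      simp only [lpq, Set.mem_setOf_eq] at h1 h2
      obtain ⟨a1, a2⟩ := h1
      obtain ⟨b1, b2⟩ := h2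
      constructor <;> nlinarith [a1, a2, b1, b2]
    · simp only [dirpq, Prod.mk.injEq] at hd
      exact ⟨hd.1, hd.2.1⟩
  · rintro ⟨h1, h2⟩
    by_cases hs : p₁.1 + p₃.1 = p₂.1 + p₄.1 ∧ p₁.2 + p₃.2 = p₂.2 + p₄.2
    · left
      ext x
      simp only [lpq, Set.mem_setOf_eq]
      constructor <;> rintro ⟨e1, e2⟩ <;>
        first
        | (rw [h1] at e1; rw [h2] at e2; exact ⟨by linarith [hs.1], by linarith [hs.2]⟩)
        | (rw [← h1] at e1; rw [← h2] at e2; exact ⟨by linarith [hs.1], by linarith [hs.2]⟩)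
    · right
      refine ⟨by simp [dirpq, h1, h2], ?_⟩
      rintro ⟨x, ⟨e1, e2⟩, ⟨e3, e4⟩⟩
      apply hs
      rw [h1] at e1; rw [h2] at e2
      exact ⟨by linarith, by linarith⟩
end

section
/- Fix a point p in ℝ² and two distinct points q₁ ≠ q₂ in ℝ². Then the lines l_{p,q₁} and l_{p,q₂} in ℝ³ are skew: they do not intersect and are not parallel. -/
theorem stmt12 (p q₁ q₂ : ℝ × ℝ) (h : q₁ ≠ q₂) :
    (¬∃ x, x ∈ lpq p q₁ ∧ x ∈ lpq p q₂) ∧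
    ¬∃ c : ℝ, c ≠ 0 ∧ dirpq p q₁ = c • dirpq p q₂ := by
  constructor
  · rintro ⟨x, ⟨h1, h2⟩, ⟨h3, h4⟩⟩
    apply h
    set z := x.2.2
    have e1 : q₁.1 - q₂.1 = (q₁.2 - q₂.2) * z := by linarith
    have e2 : q₁.2 - q₂.2 = -((q₁.1 - q₂.1) * z) := by linarith
    have key : (q₁.2 - q₂.2) * (1 + z^2) = 0 := by rw [e1] at e2; linear_combination e2
    have hz : (1 : ℝ) + z^2 > 0 := by positivity
    have hb : q₁.2 = q₂.2 := by
      have := mul_eq_zero.mp key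
      rcases this with h' | h'
      · linarith
      · linarith
    have ha : q₁.1 = q₂.1 := by rw [hb] at e1; simp at e1; linarith
    exact Prod.ext ha hb
  · rintro ⟨c, hc, heq⟩
    simp only [dirpq, Prod.ext_iff, Prod.smul_def, smul_eq_mul] at heq
    obtain ⟨e1, e2, e3⟩ := heq
    have hc1 : c = 1 := by linarith
    subst hc1
    exact h (Prod.ext (by linarith) (by linarith))
end

section
/- Let P ⊂ ℝ² be a set of N points and let 𝔏(P) = { l_{p,q} : p, q ∈ P } be the associated family of N² lines in ℝ³. Then any plane in ℝ³ contains at most N lines of 𝔏(P), and any point of ℝ³ lies on at most N lines of 𝔏(P). -/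
/-- The family of lines `𝔏(P)` associated to a planar point set `P`. -/
def lineFam (P : Finset (ℝ × ℝ)) : Set (Set (ℝ × ℝ × ℝ)) :=
  {s | ∃ p ∈ P, ∃ q ∈ P, s = lpq p q}

lemma mem_lpq_z (p q : ℝ × ℝ) (t : ℝ) :
    (((p.1 + q.1) + (p.2 - q.2) * t) / 2, ((p.2 + q.2) + (q.1 - p.1) * t) / 2, t) ∈ lpq p q := by
  constructor <;> simp <;> ring

lemma lpq_inj {p q p' q' : ℝ × ℝ} (h : lpq p q = lpq p' q') : p = p' ∧ q = q' := by
  have h0 : _ ∈ lpq p' q' := h ▸ mem_lpq_z p q 0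
  have h1 : _ ∈ lpq p' q' := h ▸ mem_lpq_z p q 2
  obtain ⟨h0a, h0b⟩ := h0
  obtain ⟨h1a, h1b⟩ := h1
  simp only at h0a h0b h1a h1b
  refine ⟨Prod.ext ?_ ?_, Prod.ext ?_ ?_⟩ <;> linarith

lemma plane_unique {a b c e : ℝ} (habc : (a, b, c) ≠ ((0:ℝ), (0:ℝ), (0:ℝ)))
    {p q q' : ℝ × ℝ}
    (h : lpq p q ⊆ {x : ℝ × ℝ × ℝ | a * x.1 + b * x.2.1 + c * x.2.2 = e})
    (h' : lpq p q' ⊆ {x : ℝ × ℝ × ℝ | a * x.1 + b * x.2.1 + c * x.2.2 = e}) :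
    q = q' := by
  have e0 := h (mem_lpq_z p q 0)
  have e2 := h (mem_lpq_z p q 2)
  have e0' := h' (mem_lpq_z p q' 0)
  have e2' := h' (mem_lpq_z p q' 2)
  simp only [Set.mem_setOf_eq] at e0 e2 e0' e2'
  -- eqA : a*(q.1 - q'.1) + b*(q.2 - q'.2) = 0
  have eqA : a * (q.1 - q'.1) + b * (q.2 - q'.2) = 0 := by linarith
  -- from e2 - e0 : a*(p.2-q.2) + b*(q.1-p.1) + 2c = 0 (scaled)
  have eqB : b * (q.1 - q'.1) - a * (q.2 - q'.2) = 0 := by linarith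
  by_cases hab : a = 0 ∧ b = 0
  · obtain ⟨ha, hb⟩ := hab
    have hc : c ≠ 0 := by
      intro hc
      exact habc (by simp [ha, hb, hc])
    exfalso
    apply hc
    subst ha hb
    linarith
  · have hab2 : a ^ 2 + b ^ 2 ≠ 0 := by
      intro h2
      exact hab ⟨by nlinarith [sq_nonneg a, sq_nonneg b], by nlinarith [sq_nonneg a, sq_nonneg b]⟩
    have hu : (a ^ 2 + b ^ 2) * (q.1 - q'.1) = 0 := by linear_combination a * eqA + b * eqB
    have hv : (a ^ 2 + b ^ 2) * (q.2 - q'.2) = 0 := by linear_combination b * eqA - a * eqB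
    have h1 := (mul_eq_zero.mp hu).resolve_left hab2
    have h2 := (mul_eq_zero.mp hv).resolve_left hab2
    exact Prod.ext (by linarith) (by linarith)

lemma point_unique {x : ℝ × ℝ × ℝ} {p q q' : ℝ × ℝ}
    (h : x ∈ lpq p q) (h' : x ∈ lpq p q') : q = q' := by
  obtain ⟨h1, h2⟩ := h
  obtain ⟨h1', h2'⟩ := h'
  have key : (q.1 - q'.1) ^ 2 + (q.2 - q'.2) ^ 2 = 0 := by
    linear_combination (q'.1 - q.1) * (h1 - h1') + (q'.2 - q.2) * (h2 - h2')
  have h1 : q.1 - q'.1 = 0 := by nlinarith [sq_nonneg (q.1 - q'.1), sq_nonneg (q.2 - q'.2)]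
  have h2 : q.2 - q'.2 = 0 := by nlinarith [sq_nonneg (q.1 - q'.1), sq_nonneg (q.2 - q'.2)]
  exact Prod.ext (by linarith) (by linarith)

open Classical in
noncomputable def firstPt (s : Set (ℝ × ℝ × ℝ)) : ℝ × ℝ :=
  if h : ∃ p q, s = lpq p q then h.choose else 0

lemma firstPt_lpq (p q : ℝ × ℝ) : firstPt (lpq p q) = p := by
  have h : ∃ p' q', lpq p q = lpq p' q' := ⟨p, q, rfl⟩
  simp only [firstPt]
  rw [dif_pos h]
  obtain ⟨q', hq'⟩ := h.choose_spec
  exact ((lpq_inj hq').1).symm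

theorem stmt13 (P : Finset (ℝ × ℝ)) :
    (∀ a b c e : ℝ, (a, b, c) ≠ ((0 : ℝ), (0 : ℝ), (0 : ℝ)) →
      {s ∈ lineFam P | s ⊆ {x : ℝ × ℝ × ℝ | a * x.1 + b * x.2.1 + c * x.2.2 = e}}.ncard
        ≤ P.card) ∧
    (∀ x : ℝ × ℝ × ℝ, {s ∈ lineFam P | x ∈ s}.ncard ≤ P.card) := by
  constructor
  · intro a b c e habc
    rw [← Set.ncard_coe_finset P]
    apply Set.ncard_le_ncard_of_injOn firstPt
    · rintro s ⟨⟨p, hp, q, hq, rfl⟩, -⟩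
      simpa [firstPt_lpq] using hp
    · rintro s ⟨⟨p, hp, q, hq, rfl⟩, hs⟩ s' ⟨⟨p', hp', q', hq', rfl⟩, hs'⟩ hf
      rw [firstPt_lpq, firstPt_lpq] at hf
      subst hf
      rw [plane_unique habc hs hs']
  · intro x
    rw [← Set.ncard_coe_finset P]
    apply Set.ncard_le_ncard_of_injOn firstPt
    · rintro s ⟨⟨p, hp, q, hq, rfl⟩, -⟩
      simpa [firstPt_lpq] using hp
    · rintro s ⟨⟨p, hp, q, hq, rfl⟩, hs⟩ s' ⟨⟨p', hp', q', hq', rfl⟩, hs'⟩ hf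
      rw [firstPt_lpq, firstPt_lpq] at hf
      subst hf
      rw [point_unique hs hs']
end

section
/- Let Z(P) ⊂ ℝ³ be the zero set of a nonzero polynomial P of degree at most D, with irreducible components Z_j = Z(P_j) where P = ∏ P_j. Let 𝔏 be a set of L lines in ℝ³, S a finite set of points, and r ≥ 2. If a point x ∈ S ∩ Z_j lies on at least r lines of 𝔏 but on fewer than ⌈(9/10)r⌉ lines of 𝔏 contained in Z_j, then x lies on at least r/10 lines of 𝔏 not contained in Z_j; consequently |(S ∩ Z_j) ∖ P_{r'}(𝔏_{Z_j})| ≤ 10·r^{-1}·(deg Z_j)·L, where r' = ⌈(9/10)r⌉, 𝔏_{Z_j} is the set of lines of 𝔏 contained in Z_j, and P_{r'} denotes r'-rich points. -/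
open Polynomial

namespace MvPolynomial

variable {σ R : Type*} [CommSemiring R]

theorem natDegree_aeval_le_totalDegree [Fintype σ] (f : σ → R[X]) (hf : ∀ i, (f i).natDegree ≤ 1)
    (Q : MvPolynomial σ R) : (aeval f Q).natDegree ≤ Q.totalDegree := by
  rw [aeval_eq_eval₂Hom, coe_eval₂Hom, eval₂_eq']
  refine natDegree_sum_le_of_forall_le _ _ fun d hd => ?_
  calc _ ≤ (∏ i, f i ^ d i).natDegree := natDegree_C_mul_le _ _
    _ ≤ ∑ i, (f i ^ d i).natDegree := natDegree_prod_le _ _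
    _ ≤ ∑ i, d i := Finset.sum_le_sum fun i _ =>
        natDegree_pow_le.trans (by simpa using Nat.mul_le_mul_left (d i) (hf i))
    _ ≤ Q.totalDegree := by
        simpa [Finsupp.sum_fintype] using le_totalDegree hd

theorem eval_aeval (f : σ → R[X]) (Q : MvPolynomial σ R) (t : R) :
    (aeval f Q).eval t = eval (fun i => (f i).eval t) Q := by
  rw [← Polynomial.coe_aeval_eq_eval, ← AlgHom.comp_apply, comp_aeval, ← coe_aeval_eq_eval]
  simp [Polynomial.coe_aeval_eq_eval]

end MvPolynomial

theorem IsLine.encard_inter_zeroSet_le {ℓ : Set (Fin 3 → ℝ)} (hℓ : IsLine ℓ) {Q : MvPolynomial (Fin 3) ℝ}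
    (hQ : ¬ ℓ ⊆ zeroSet Q) : (ℓ ∩ zeroSet Q).encard ≤ Q.totalDegree := by
  obtain ⟨a, v, -, rfl⟩ := hℓ
  set q : ℝ[X] := MvPolynomial.aeval (fun i => C (v i) * X + C (a i)) Q
  have hq : ∀ t, q.eval t = MvPolynomial.eval (a + t • v) Q := fun t => by
    simp only [q, MvPolynomial.eval_aeval, eval_add, eval_mul, eval_C, eval_X]
    exact congrArg (MvPolynomial.eval · Q) (funext fun i => by simp [add_comm, mul_comm])
  have hq0 : q ≠ 0 := by
    rintro h0
    refine hQ ?_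
    rintro _ ⟨t, rfl⟩
    simp [zeroSet, ← hq, h0]
  have hline : {x | ∃ t : ℝ, x = a + t • v} ∩ zeroSet Q
      = (fun t => a + t • v) '' (q.roots.toFinset : Set ℝ) := by
    ext x
    simp only [Set.mem_inter_iff, Set.mem_ofPred_eq, zeroSet, Set.mem_image, Finset.mem_coe,
      Multiset.mem_toFinset, mem_roots hq0, IsRoot.def, hq]
    grind
  calc _ = ((fun t => a + t • v) '' (q.roots.toFinset : Set ℝ)).encard := by rw [hline]
    _ ≤ q.roots.toFinset.card := by
        simpa using Set.encard_image_le (fun t => a + t • v) (q.roots.toFinset : Set ℝ)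
    _ ≤ q.natDegree := by
        exact_mod_cast (Multiset.toFinset_card_le _).trans (card_roots' q)
    _ ≤ Q.totalDegree := by
        exact_mod_cast MvPolynomial.natDegree_aeval_le_totalDegree _
          (fun _ => natDegree_linear_le) Q

section IncidenceCounting

variable {α : Type*}

theorem ncard_setOf_mem_and (s : Finset α) (p : α → Prop) [DecidablePred p] :
    {a | a ∈ s ∧ p a}.ncard = (s.filter p).card := by
  rw [← Set.ncard_coe_finset, Finset.coe_filter]

theorem ncard_setOf_mem_and_eq_add (s : Finset α) (p q : α → Prop) :
    {a | a ∈ s ∧ q a}.ncard = {a | a ∈ s ∧ p a ∧ q a}.ncard + {a | a ∈ s ∧ ¬ p a ∧ q a}.ncard := by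
  classical
  simp only [ncard_setOf_mem_and]
  rw [← Finset.card_filter_add_card_filter_not (s := s.filter q) p, Finset.filter_filter,
    Finset.filter_filter]
  simp only [and_comm]

theorem div_ten_le_of_lt_ceil {r a b : ℕ} (hr : r ≤ a + b) (ha : a < ⌈(9 / 10 : ℝ) * r⌉₊) :
    (r : ℝ) / 10 ≤ b := by
  have hceil := Nat.ceil_lt_add_one (show 0 ≤ (9 / 10 : ℝ) * r by positivity)
  have ha' : (a : ℝ) + 1 ≤ ⌈(9 / 10 : ℝ) * r⌉₊ := by exact_mod_cast ha
  have hr' : (r : ℝ) ≤ a + b := by exact_mod_cast hr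
  linarith

theorem div_ten_le_ncard_not_subset (𝔏 : Finset (Set α)) (Z : Set α) {x : α} {r : ℕ}
    (hx : r ≤ {ℓ | ℓ ∈ 𝔏 ∧ x ∈ ℓ}.ncard)
    (hZ : {ℓ | ℓ ∈ 𝔏 ∧ ℓ ⊆ Z ∧ x ∈ ℓ}.ncard < ⌈(9 / 10 : ℝ) * r⌉₊) :
    (r : ℝ) / 10 ≤ {ℓ | ℓ ∈ 𝔏 ∧ ¬ ℓ ⊆ Z ∧ x ∈ ℓ}.ncard :=
  div_ten_le_of_lt_ceil (ncard_setOf_mem_and_eq_add 𝔏 (· ⊆ Z) (x ∈ ·) ▸ hx) hZ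

theorem card_mul_le_card_mul_of_encard_inter_le (𝔏 : Finset (Set α)) (Z : Set α) {D : ℕ}
    (hD : ∀ ℓ ∈ 𝔏, ¬ ℓ ⊆ Z → (ℓ ∩ Z).encard ≤ D) (B : Finset α) (hB : ↑B ⊆ Z) {m : ℝ}
    (hm : ∀ x ∈ B, m ≤ {ℓ | ℓ ∈ 𝔏 ∧ ¬ ℓ ⊆ Z ∧ x ∈ ℓ}.ncard) :
    B.card * m ≤ 𝔏.card * D := by
  classical
  have hn : ∀ ℓ ∈ 𝔏, ((B.bipartiteBelow (fun x ℓ => ¬ ℓ ⊆ Z ∧ x ∈ ℓ) ℓ).card : ℝ) ≤ D := by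
    intro ℓ hℓ
    by_cases hℓZ : ℓ ⊆ Z
    · simp [Finset.bipartiteBelow, hℓZ]
    have hsub : ↑(B.bipartiteBelow (fun x ℓ => ¬ ℓ ⊆ Z ∧ x ∈ ℓ) ℓ) ⊆ ℓ ∩ Z := fun x hx => by
      simp only [Finset.bipartiteBelow, Finset.coe_filter, Set.mem_ofPred_eq] at hx
      exact ⟨hx.2.2, hB hx.1⟩
    have := (Set.encard_le_encard hsub).trans (hD ℓ hℓ hℓZ)
    rw [Set.encard_coe_eq_coe_finsetCard] at this
    exact_mod_cast this
  simpa using Finset.card_nsmul_le_card_nsmul (fun x ℓ => ¬ ℓ ⊆ Z ∧ x ∈ ℓ)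
    (fun x hx => by simpa [Finset.bipartiteAbove, ncard_setOf_mem_and] using hm x hx) hn

end IncidenceCounting

theorem stmt15_general (𝔏 : Finset (Set (Fin 3 → ℝ))) (hlines : ∀ ℓ ∈ 𝔏, IsLine ℓ)
    (S : Finset (Fin 3 → ℝ)) (r : ℕ) (hr : 2 ≤ r)
    (hS : ∀ x ∈ S, r ≤ {ℓ | ℓ ∈ 𝔏 ∧ x ∈ ℓ}.ncard)
    (Pj : MvPolynomial (Fin 3) ℝ) :
    (∀ x ∈ S, x ∈ zeroSet Pj →
      {ℓ | ℓ ∈ 𝔏 ∧ ℓ ⊆ zeroSet Pj ∧ x ∈ ℓ}.ncard < ⌈(9 / 10 : ℝ) * r⌉₊ →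
      (r : ℝ) / 10 ≤ ({ℓ | ℓ ∈ 𝔏 ∧ ¬ ℓ ⊆ zeroSet Pj ∧ x ∈ ℓ}.ncard : ℝ)) ∧
    (((((S : Set (Fin 3 → ℝ)) ∩ zeroSet Pj) \
        {x | ⌈(9 / 10 : ℝ) * r⌉₊ ≤ {ℓ | ℓ ∈ 𝔏 ∧ ℓ ⊆ zeroSet Pj ∧ x ∈ ℓ}.ncard}).ncard : ℝ)
      ≤ 10 * (r : ℝ)⁻¹ * (Pj.totalDegree : ℝ) * (𝔏.card : ℝ)) := by
  classical
  refine ⟨fun x hx _ hZ => div_ten_le_ncard_not_subset 𝔏 _ (hS x hx) hZ, ?_⟩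
  set B := S.filter fun x => x ∈ zeroSet Pj ∧
    {ℓ | ℓ ∈ 𝔏 ∧ ℓ ⊆ zeroSet Pj ∧ x ∈ ℓ}.ncard < ⌈(9 / 10 : ℝ) * r⌉₊
  have hB : ((S : Set (Fin 3 → ℝ)) ∩ zeroSet Pj) \
      {x | ⌈(9 / 10 : ℝ) * r⌉₊ ≤ {ℓ | ℓ ∈ 𝔏 ∧ ℓ ⊆ zeroSet Pj ∧ x ∈ ℓ}.ncard} = B := by
    ext x
    simp only [B, Finset.coe_filter, Set.mem_sdiff, Set.mem_inter_iff, Finset.mem_coe,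
      Set.mem_ofPred_eq, not_le, and_assoc]
  have hcount := card_mul_le_card_mul_of_encard_inter_le 𝔏 (zeroSet Pj)
    (fun ℓ hℓ => (hlines ℓ hℓ).encard_inter_zeroSet_le) B
    (fun x hx => (Finset.mem_filter.1 hx).2.1)
    (fun x hx => div_ten_le_ncard_not_subset 𝔏 _ (hS x (Finset.mem_filter.1 hx).1)
      (Finset.mem_filter.1 hx).2.2)
  have hr0 : (0 : ℝ) < r := by exact_mod_cast (by omega : 0 < r)
  rw [hB, Set.ncard_coe_finset]
  calc (B.card : ℝ) = B.card * (r / 10) / (r / 10) := by field_simp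
    _ ≤ 𝔏.card * Pj.totalDegree / (r / 10) := by gcongr
    _ = _ := by field_simp

theorem stmt15 (𝔏 : Finset (Set (Fin 3 → ℝ))) (hlines : ∀ ℓ ∈ 𝔏, IsLine ℓ)
    (S : Finset (Fin 3 → ℝ)) (r : ℕ) (hr : 2 ≤ r)
    (hS : ∀ x ∈ S, r ≤ {ℓ | ℓ ∈ 𝔏 ∧ x ∈ ℓ}.ncard)
    (Pj : MvPolynomial (Fin 3) ℝ) (hPj : Pj ≠ 0) (hirr : Irreducible Pj) :
    (∀ x ∈ S, x ∈ zeroSet Pj →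
      {ℓ | ℓ ∈ 𝔏 ∧ ℓ ⊆ zeroSet Pj ∧ x ∈ ℓ}.ncard < ⌈(9 / 10 : ℝ) * r⌉₊ →
      (r : ℝ) / 10 ≤ ({ℓ | ℓ ∈ 𝔏 ∧ ¬ ℓ ⊆ zeroSet Pj ∧ x ∈ ℓ}.ncard : ℝ)) ∧
    (((((S : Set (Fin 3 → ℝ)) ∩ zeroSet Pj) \
        {x | ⌈(9 / 10 : ℝ) * r⌉₊ ≤ {ℓ | ℓ ∈ 𝔏 ∧ ℓ ⊆ zeroSet Pj ∧ x ∈ ℓ}.ncard}).ncard : ℝ)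
      ≤ 10 * (r : ℝ)⁻¹ * (Pj.totalDegree : ℝ) * (𝔏.card : ℝ)) :=
  stmt15_general 𝔏 hlines S r hr hS Pj
end

section
/- Let 𝔏 be a finite set of L lines in ℝ³, r ≥ 2, and r' = ⌈(9/10)r⌉. Let 𝒵̃ be a finite collection of surfaces, and for each integer s ≥ 0 let 𝒵̃_s := { Z ∈ 𝒵̃ : |𝔏_Z| ∈ [2^s, 2^{s+1}) }. Suppose |𝒵̃_s| ≤ 2L·2^{-s} whenever 2^s > 2D·L^{1/2}, |𝒵̃| ≤ M, and for each Z, |P_{r'}(𝔏_Z)| ≤ C(|𝔏_Z|²·r^{-3} + |𝔏_Z|·r^{-1}) (Szemerédi–Trotter). Then, summing over all Z ∈ 𝒵̃ with |𝔏_Z| < L^{1/2+ε}, one has ∑ |P_{r'}(𝔏_Z)| ≤ C'·(L^{3/2+ε} r^{-2} + M·D²·L·r^{-2}) for an absolute constant C' (assuming 2 ≤ r ≤ 2L^{1/2}). -/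
open Classical

/-- `nl 𝔏 Z` : the number of lines of `𝔏` contained in the surface `Z`. -/
noncomputable def nl (𝔏 : Finset (Set (Fin 3 → ℝ))) (Z : Set (Fin 3 → ℝ)) : ℕ :=
  {ℓ | ℓ ∈ 𝔏 ∧ ℓ ⊆ Z}.ncard

/-- `richZ 𝔏 Z r'` : the number of points lying on at least `r'` lines of `𝔏_Z`. -/
noncomputable def richZ (𝔏 : Finset (Set (Fin 3 → ℝ))) (Z : Set (Fin 3 → ℝ))
    (r' : ℕ) : ℕ :=
  {x : Fin 3 → ℝ | r' ≤ {ℓ | ℓ ∈ 𝔏 ∧ ℓ ⊆ Z ∧ x ∈ ℓ}.ncard}.ncard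

/-!
Split the surfaces at `|𝔏_Z| ≈ 4D√L`. Below the threshold the Szemerédi–Trotter bound is
`O(D²L/r²)` per surface, and there are at most `M` surfaces. Above it `r ≤ 2√L ≤ |𝔏_Z|/2`, so the
bound is `O(|𝔏_Z|²/r²)`; the dyadic shell `s` then contributes `O(2^{-s} L · 4^s / r²)`, and the
geometric sum over the shells with `2^s < L^{1/2+ε}` is `O(L^{3/2+ε}/r²)`.
-/

open Finset

noncomputable def szemerediTrotterBound (C n r : ℝ) : ℝ :=
  C * (n ^ 2 * (r ^ 3)⁻¹ + n * r⁻¹)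

lemma szemerediTrotterBound_le_of_lt {C D Q n r : ℝ} (hC : 0 ≤ C) (hD : 1 ≤ D) (hr : 2 ≤ r)
    (hrQ : r ≤ 2 * Q) (hn₀ : 0 ≤ n) (hn : n < 4 * D * Q) :
    szemerediTrotterBound C n r ≤ 16 * C * D ^ 2 * Q ^ 2 * (r ^ 2)⁻¹ := by
  have hr₀ : 0 < r := by linarith
  have key : n ^ 2 + n * r ^ 2 ≤ 16 * D ^ 2 * Q ^ 2 * r := by
    have hQ : 0 < Q := by linarith
    have hn2 : n ^ 2 ≤ 16 * D ^ 2 * Q ^ 2 := by nlinarith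
    have hnr : n * r ≤ 8 * D * Q ^ 2 := by nlinarith
    have hDQ : 0 ≤ D ^ 2 * Q ^ 2 := by positivity
    nlinarith [mul_le_mul_of_nonneg_right hnr hr₀.le, mul_le_mul_of_nonneg_left hr hDQ,
      mul_le_mul_of_nonneg_left hD (by positivity : (0 : ℝ) ≤ 8 * D * Q ^ 2 * r)]
  unfold szemerediTrotterBound
  rw [show 16 * C * D ^ 2 * Q ^ 2 * (r ^ 2)⁻¹ = C * (16 * D ^ 2 * Q ^ 2 * r / r ^ 3) by
    field_simp]
  gcongr
  rw [le_div_iff₀ (by positivity)]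
  field_simp
  linarith

lemma szemerediTrotterBound_le_of_two_mul_le {C n r : ℝ} (hC : 0 ≤ C) (hr : 2 ≤ r)
    (hn : 2 * r ≤ n) :
    szemerediTrotterBound C n r ≤ C * (r ^ 2)⁻¹ * n ^ 2 := by
  unfold szemerediTrotterBound
  have hr₀ : 0 < r := by linarith
  rw [show C * (r ^ 2)⁻¹ * n ^ 2 = C * (n ^ 2 * r / r ^ 3) by field_simp]
  gcongr
  rw [le_div_iff₀ (by positivity)]
  field_simp
  have hn₀ : 0 ≤ n := by linarith
  nlinarith [mul_le_mul_of_nonneg_left hn (by positivity : 0 ≤ n * r),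
    mul_le_mul_of_nonneg_left hr (sq_nonneg n)]

lemma sum_two_pow_le_two_mul {S : Finset ℕ} {X : ℝ} (hX : 0 ≤ X)
    (hS : ∀ s ∈ S, (2 : ℝ) ^ s < X) : ∑ s ∈ S, (2 : ℝ) ^ s ≤ 2 * X := by
  rcases S.eq_empty_or_nonempty with rfl | hne
  · simpa using hX
  have hsum : ∑ s ∈ S, 2 ^ s < 2 ^ (S.max' hne + 1) :=
    Nat.geomSum_lt le_rfl fun s hs => Nat.lt_succ_of_le (S.le_max' s hs)
  calc ∑ s ∈ S, (2 : ℝ) ^ s = ((∑ s ∈ S, 2 ^ s : ℕ) : ℝ) := by push_cast; rfl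
    _ ≤ 2 ^ (S.max' hne + 1) := by exact_mod_cast hsum.le
    _ = 2 * 2 ^ S.max' hne := by ring
    _ ≤ 2 * X := by linarith [hS _ (S.max'_mem hne)]

lemma sum_ite_lt_le_add {α : Type*} {s : Finset α} {x g : α → ℝ} (hg : ∀ Z ∈ s, 0 ≤ g Z)
    (t X : ℝ) :
    ∑ Z ∈ s, (if x Z < X then g Z else 0)
      ≤ ∑ Z ∈ s with x Z < t, g Z + ∑ Z ∈ s with t ≤ x Z ∧ x Z < X, g Z := by
  rw [sum_filter, sum_filter, ← sum_add_distrib]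
  refine sum_le_sum fun Z hZ => ?_
  have := hg Z hZ
  by_cases ht : x Z < t
  · split_ifs <;> linarith
  · simp [ht, not_lt.1 ht]

lemma sum_filter_le_mul_of_le {α : Type*} {s : Finset α} {p : α → Prop} {f : α → ℝ} {b M : ℝ}
    (hb : 0 ≤ b) (hM : (#s : ℝ) ≤ M) (hf : ∀ Z ∈ s, p Z → f Z ≤ b) :
    ∑ Z ∈ s with p Z, f Z ≤ M * b := by
  refine (sum_le_card_nsmul _ _ b fun Z hZ => ?_).trans ?_
  · obtain ⟨hZs, hpZ⟩ := mem_filter.1 hZ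
    exact hf Z hZs hpZ
  · rw [nsmul_eq_mul]
    gcongr
    exact le_trans (by exact_mod_cast card_filter_le _ _) hM

section Dyadic

variable {α : Type*} (𝒵 : Finset α) (n : α → ℕ)

def dyadicShell (s : ℕ) : Finset α :=
  {Z ∈ 𝒵 | 2 ^ s ≤ n Z ∧ n Z < 2 ^ (s + 1)}

variable {𝒵 n}

lemma mem_dyadicShell_log {Z : α} (hZ : Z ∈ 𝒵) (hn : n Z ≠ 0) :
    Z ∈ dyadicShell 𝒵 n (Nat.log 2 (n Z)) :=
  mem_filter.2 ⟨hZ, Nat.pow_log_le_self 2 hn, Nat.lt_pow_succ_log_self one_lt_two _⟩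

lemma sum_le_of_subset_dyadicShell {F : Finset α} {f : α → ℝ} {s : ℕ} {A K : ℝ}
    (hF : F ⊆ dyadicShell 𝒵 n s) (hK : 0 ≤ K)
    (hcard : (#(dyadicShell 𝒵 n s) : ℝ) ≤ A * ((2 : ℝ) ^ s)⁻¹)
    (hf : ∀ Z ∈ F, f Z ≤ K * n Z ^ 2) :
    ∑ Z ∈ F, f Z ≤ 4 * A * K * 2 ^ s := by
  have hbound : ∀ Z ∈ F, f Z ≤ K * (4 * 4 ^ s) := by
    intro Z hZ
    have hnZ : (n Z : ℝ) < 2 ^ (s + 1) := by exact_mod_cast (mem_filter.1 (hF hZ)).2.2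
    calc f Z ≤ K * n Z ^ 2 := hf Z hZ
      _ ≤ K * (2 ^ (s + 1)) ^ 2 := by gcongr
      _ = K * (4 * 4 ^ s) := by
        rw [← pow_mul, show (4 : ℝ) = 2 ^ 2 by norm_num, ← pow_mul]; ring
  have hFcard : (#F : ℝ) ≤ A * ((2 : ℝ) ^ s)⁻¹ :=
    (Nat.cast_le.2 (card_le_card hF)).trans hcard
  calc ∑ Z ∈ F, f Z ≤ #F • (K * (4 * 4 ^ s)) := sum_le_card_nsmul _ _ _ hbound
    _ = #F * (K * (4 * 4 ^ s)) := nsmul_eq_mul _ _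
    _ ≤ A * ((2 : ℝ) ^ s)⁻¹ * (K * (4 * 4 ^ s)) := by gcongr
    _ = 4 * A * K * 2 ^ s := by
      rw [show (4 : ℝ) ^ s = 2 ^ s * 2 ^ s by rw [← mul_pow]; norm_num]
      field_simp

lemma sum_le_of_card_dyadicShell_le (f : α → ℝ) {T X A K : ℝ} (hT : 0 < T) (hX : 0 ≤ X)
    (hA : 0 ≤ A) (hK : 0 ≤ K)
    (hcard : ∀ s : ℕ, T < 2 ^ s → (#(dyadicShell 𝒵 n s) : ℝ) ≤ A * ((2 : ℝ) ^ s)⁻¹)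
    (hf : ∀ Z ∈ 𝒵, 2 * T ≤ n Z → f Z ≤ K * n Z ^ 2) :
    ∑ Z ∈ 𝒵 with 2 * T ≤ n Z ∧ (n Z : ℝ) < X, f Z ≤ 8 * A * K * X := by
  set B := {Z ∈ 𝒵 | 2 * T ≤ n Z ∧ (n Z : ℝ) < X}
  set S := B.image fun Z => Nat.log 2 (n Z)
  have hlog : ∀ Z ∈ B, Z ∈ dyadicShell 𝒵 n (Nat.log 2 (n Z)) := by
    intro Z hZ
    obtain ⟨hZ𝒵, hlarge, -⟩ := mem_filter.1 hZ
    refine mem_dyadicShell_log hZ𝒵 fun h => ?_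
    rw [h, Nat.cast_zero] at hlarge
    linarith
  have hS : ∀ s ∈ S, T < 2 ^ s ∧ (2 : ℝ) ^ s < X := by
    intro s hs
    obtain ⟨Z, hZ, rfl⟩ := mem_image.1 hs
    obtain ⟨-, hlarge, hsmall⟩ := mem_filter.1 hZ
    obtain ⟨-, hlow, hhigh⟩ := mem_filter.1 (hlog Z hZ)
    have hlow' : ((2 ^ Nat.log 2 (n Z) : ℕ) : ℝ) ≤ n Z := by exact_mod_cast hlow
    have hhigh' : (n Z : ℝ) < (2 ^ (Nat.log 2 (n Z) + 1) : ℕ) := by exact_mod_cast hhigh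
    push_cast [pow_succ] at hlow' hhigh'
    constructor <;> linarith
  have hfiber : ∀ s ∈ S, ∑ Z ∈ B with Nat.log 2 (n Z) = s, f Z ≤ 4 * A * K * 2 ^ s := by
    intro s hs
    refine sum_le_of_subset_dyadicShell ?_ hK (hcard s (hS s hs).1) fun Z hZ => ?_
    · intro Z hZ
      obtain ⟨hZB, rfl⟩ := mem_filter.1 hZ
      exact hlog Z hZB
    · obtain ⟨hZ𝒵, hlarge, -⟩ := mem_filter.1 (mem_filter.1 hZ).1
      exact hf Z hZ𝒵 hlarge
  rw [← sum_fiberwise_of_maps_to fun Z hZ => mem_image_of_mem (fun Z => Nat.log 2 (n Z)) hZ]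
  calc _ ≤ ∑ s ∈ S, 4 * A * K * 2 ^ s := sum_le_sum hfiber
    _ = 4 * A * K * ∑ s ∈ S, (2 : ℝ) ^ s := (mul_sum ..).symm
    _ ≤ 4 * A * K * (2 * X) := by
      gcongr
      exact sum_two_pow_le_two_mul hX fun s hs => (hS s hs).2
    _ = 8 * A * K * X := by ring

end Dyadic

theorem stmt17 (C : ℝ) (hC : 0 ≤ C) :
    ∃ C' : ℝ, 0 < C' ∧
    ∀ (𝔏 𝒵 : Finset (Set (Fin 3 → ℝ))) (D M ε : ℝ) (r : ℕ),
      (∀ ℓ ∈ 𝔏, IsLine ℓ) →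
      1 ≤ D → 0 < ε → ε ≤ 1 / 2 → 2 ≤ r →
      (r : ℝ) ≤ 2 * Real.sqrt (𝔏.card) →
      (∀ s : ℕ, (2 : ℝ) ^ s > 2 * D * Real.sqrt (𝔏.card) →
        ({Z | Z ∈ 𝒵 ∧ 2 ^ s ≤ nl 𝔏 Z ∧ nl 𝔏 Z < 2 ^ (s + 1)}.ncard : ℝ)
          ≤ 2 * (𝔏.card : ℝ) * ((2 : ℝ) ^ s)⁻¹) →
      ((𝒵.card : ℝ) ≤ M) →
      (∀ Z ∈ 𝒵, (richZ 𝔏 Z ⌈(9 / 10 : ℝ) * r⌉₊ : ℝ)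
          ≤ C * ((nl 𝔏 Z : ℝ) ^ 2 * ((r : ℝ) ^ 3)⁻¹ + (nl 𝔏 Z : ℝ) * (r : ℝ)⁻¹)) →
      ∑ Z ∈ 𝒵, (if (nl 𝔏 Z : ℝ) < (𝔏.card : ℝ) ^ ((1 : ℝ) / 2 + ε)
          then (richZ 𝔏 Z ⌈(9 / 10 : ℝ) * r⌉₊ : ℝ) else 0)
        ≤ C' * ((𝔏.card : ℝ) ^ ((3 : ℝ) / 2 + ε) * ((r : ℝ) ^ 2)⁻¹
                + M * D ^ 2 * (𝔏.card : ℝ) * ((r : ℝ) ^ 2)⁻¹) := by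
  refine ⟨16 * C + 1, by positivity, ?_⟩
  intro 𝔏 𝒵 D M ε r _ hD _ _ hr hrL hdyad hM hST
  set L : ℝ := (𝔏.card : ℝ)
  set X : ℝ := L ^ ((1 : ℝ) / 2 + ε)
  set r' := ⌈(9 / 10 : ℝ) * r⌉₊
  have hr₂ : (2 : ℝ) ≤ r := by exact_mod_cast hr
  have hL : 1 ≤ L := Real.one_le_sqrt.1 (by linarith)
  have hM₀ : 0 ≤ M := (Nat.cast_nonneg _).trans hM
  have hsmall : ∑ Z ∈ 𝒵 with (nl 𝔏 Z : ℝ) < 4 * D * √L, (richZ 𝔏 Z r' : ℝ)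
      ≤ M * (16 * C * D ^ 2 * L * ((r : ℝ) ^ 2)⁻¹) := by
    refine sum_filter_le_mul_of_le (by positivity) hM fun Z hZ hZsmall => (hST Z hZ).trans ?_
    have := szemerediTrotterBound_le_of_lt hC hD hr₂ hrL (Nat.cast_nonneg _) hZsmall
    rwa [Real.sq_sqrt (by linarith)] at this
  have hlarge : ∑ Z ∈ 𝒵 with 4 * D * √L ≤ nl 𝔏 Z ∧ (nl 𝔏 Z : ℝ) < X, (richZ 𝔏 Z r' : ℝ)
      ≤ 8 * (2 * L) * (C * ((r : ℝ) ^ 2)⁻¹) * X := by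
    have := sum_le_of_card_dyadicShell_le (fun Z => (richZ 𝔏 Z r' : ℝ))
      (T := 2 * D * √L) (X := X) (A := 2 * L) (K := C * ((r : ℝ) ^ 2)⁻¹)
      (by positivity) (by positivity) (by positivity) (by positivity)
      (fun s hs => by rw [dyadicShell, ← Set.ncard_coe_finset, coe_filter]; exact hdyad s hs)
      (fun Z hZ hlarge => (hST Z hZ).trans
        (szemerediTrotterBound_le_of_two_mul_le hC hr₂ (by nlinarith [Real.sqrt_nonneg L])))
    rwa [show 2 * (2 * D * √L) = 4 * D * √L by ring] at this
  have hpow : L ^ ((3 : ℝ) / 2 + ε) = L * X := by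
    rw [show (3 : ℝ) / 2 + ε = 1 + (1 / 2 + ε) by ring, Real.rpow_add (by positivity),
      Real.rpow_one]
  calc _ ≤ _ := sum_ite_lt_le_add (fun Z _ => Nat.cast_nonneg _) (4 * D * √L) X
    _ ≤ 16 * C * (L * X * ((r : ℝ) ^ 2)⁻¹ + M * D ^ 2 * L * ((r : ℝ) ^ 2)⁻¹) := by
      linarith
    _ ≤ _ := by
      rw [hpow]
      gcongr
      linarith
end
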